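/- Let F be a finite field, p a prime different from char(F), and C = C^⊥ ⊆ F^n a self-dual code (with respect to the standard bilinear form ∑ x_i y_i) invariant under a coordinate permutation σ of order p with t cycles of length p and f fixed points (n = pt + f). Let C(σ) be the fixed code and E = {c ∈ C : the coordinate sum of c over each cycle is 0 and c vanishes at all fixed points}. Then dim_F C(σ) = (t+f)/2 and dim_F E = t(p−1)/2. -/

import Mathlib

open Finset

/-- The linear action of a coordinate permutation on `F^n`: `(π x) i = x (π⁻¹ i)`. -/
def permLinear {F : Type*} [Field F] {n : ℕ} (π : Equiv.Perm (Fin n)) :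
    (Fin n → F) →ₗ[F] (Fin n → F) where
  toFun x := fun i => x (π⁻¹ i)
  map_add' _ _ := rfl
  map_smul' _ _ := rfl

/-- Vectors that are constant on every cycle of `π`. -/
def constantOnCycles {F : Type*} [Field F] {n : ℕ} (π : Equiv.Perm (Fin n)) :
    Submodule F (Fin n → F) where
  carrier := {x | ∀ i, x (π i) = x i}
  add_mem' := by intro a b ha hb i; simp [ha i, hb i]
  zero_mem' := fun _ => rfl
  smul_mem' := by intro c x hx i; simp [hx i]

/-- Vectors vanishing on all fixed points of `π` whose coordinate sum over each
cycle (of length `p`) is zero. -/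
def cycleSumZero {F : Type*} [Field F] {n : ℕ} (π : Equiv.Perm (Fin n)) (p : ℕ) :
    Submodule F (Fin n → F) where
  carrier := {x | (∀ i, π i = i → x i = 0) ∧
    ∀ i, ∑ k ∈ Finset.range p, x ((π ^ k) i) = 0}
  add_mem' := by
    rintro a b ⟨ha1, ha2⟩ ⟨hb1, hb2⟩
    refine ⟨fun i hi => by simp [ha1 i hi, hb1 i hi], fun i => ?_⟩
    simp only [Pi.add_apply, Finset.sum_add_distrib, ha2 i, hb2 i, add_zero]
  zero_mem' := ⟨fun _ _ => rfl, fun i => by simp⟩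
  smul_mem' := by
    rintro c x ⟨h1, h2⟩
    refine ⟨fun i hi => by simp [h1 i hi], fun i => ?_⟩
    simp only [Pi.smul_apply, smul_eq_mul, ← Finset.mul_sum, h2 i, mul_zero]

/-- Self-duality with respect to a bilinear form given as a function. -/
def IsSelfDualWith {F : Type*} [Field F] {n : ℕ}
    (B : (Fin n → F) → (Fin n → F) → F) (C : Submodule F (Fin n → F)) : Prop :=
  ∀ x, x ∈ C ↔ ∀ c ∈ C, B x c = 0

/-- The standard bilinear form `∑ i, x i * y i`. -/
def stdB {F : Type*} [Field F] {n : ℕ} (x y : Fin n → F) : F := ∑ i, x i * y i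

/-!
Averaging over the powers of `σ`, `x ↦ p⁻¹ ∑ₖ x ∘ σᵏ` (possible since `p` is invertible in
`F`), splits `F^n` into the orthogonal direct sum of the cycle-constant vectors `V₁` and the
vectors `V₂` with zero cycle sums vanishing at the fixed points, and it maps the `σ`-invariant
code `C` into itself, so `C = (C ∩ V₁) ⊕ (C ∩ V₂)`. Each `C ∩ Vᵢ` is totally isotropic and
orthogonal to the other summand, hence `2 dim (C ∩ Vᵢ) ≤ dim Vᵢ`; since `2 dim C = n` both
bounds are attained. Finally `dim V₁` is the number `t + f` of cycles of `σ`.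
-/

open Module

section SelfDual

lemma LinearMap.BilinForm.le_orthogonal_sup {R M : Type*} [CommSemiring R] [AddCommMonoid M]
    [Module R M] {B : LinearMap.BilinForm R M} {N W U : Submodule R M}
    (hW : N ≤ B.orthogonal W) (hU : N ≤ B.orthogonal U) : N ≤ B.orthogonal (W ⊔ U) := by
  intro x hx y hy
  obtain ⟨a, ha, b, hb, rfl⟩ := Submodule.mem_sup.mp hy
  rw [LinearMap.map_add₂, hW hx a ha, hU hx b hb, add_zero]

variable {K V : Type*} [Field K] [AddCommGroup V] [Module K V] [FiniteDimensional K V]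
  {B : LinearMap.BilinForm K V}

lemma two_mul_finrank_add_finrank_le (hB : B.Nondegenerate) {W U : Submodule K V}
    (hWU : Disjoint W U) (hW : W ≤ B.orthogonal (W ⊔ U)) :
    2 * finrank K W + finrank K U ≤ finrank K V := by
  have hsup := Submodule.finrank_sup_add_finrank_inf_eq W U
  rw [hWU.eq_bot, finrank_bot, add_zero] at hsup
  have hle := Submodule.finrank_mono hW
  rw [LinearMap.BilinForm.finrank_orthogonal hB] at hle
  have := Submodule.finrank_le (W ⊔ U)
  omega

lemma two_mul_finrank_eq_of_orthogonal_eq (hB : B.Nondegenerate) {C : Submodule K V}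
    (hC : B.orthogonal C = C) : 2 * finrank K C = finrank K V := by
  have h := LinearMap.BilinForm.finrank_orthogonal hB C
  rw [hC] at h
  have := Submodule.finrank_le C
  omega

theorem two_mul_finrank_inf_eq_of_isCompl (hB : B.Nondegenerate) (hBr : B.IsRefl)
    {C V₁ V₂ : Submodule K V} (hC : B.orthogonal C = C) (hV : IsCompl V₁ V₂)
    (hV₁₂ : V₁ ≤ B.orthogonal V₂) (hsplit : C ⊓ V₁ ⊔ C ⊓ V₂ = C) :
    2 * finrank K ↥(C ⊓ V₁) = finrank K V₁ ∧ 2 * finrank K ↥(C ⊓ V₂) = finrank K V₂ := by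
  have hV₂₁ : V₂ ≤ B.orthogonal V₁ := fun x hx y hy => hBr _ _ (hV₁₂ hy x hx)
  have hiso : C ≤ B.orthogonal C := hC.ge
  have h₁ := two_mul_finrank_add_finrank_le hB (hV.disjoint.mono_left inf_le_right)
    (LinearMap.BilinForm.le_orthogonal_sup
      (inf_le_left.trans (hiso.trans (B.orthogonal_le inf_le_left)))
      (inf_le_right.trans hV₁₂))
  have h₂ := two_mul_finrank_add_finrank_le hB (hV.symm.disjoint.mono_left inf_le_right)
    (LinearMap.BilinForm.le_orthogonal_sup
      (inf_le_left.trans (hiso.trans (B.orthogonal_le inf_le_left)))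
      (inf_le_right.trans hV₂₁))
  have hCdim := Submodule.finrank_sup_add_finrank_inf_eq (C ⊓ V₁) (C ⊓ V₂)
  rw [hsplit, (hV.disjoint.mono inf_le_right inf_le_right).eq_bot, finrank_bot, add_zero]
    at hCdim
  have hVdim := Submodule.finrank_add_eq_of_isCompl hV
  have hself := two_mul_finrank_eq_of_orthogonal_eq hB hC
  omega

end SelfDual

lemma Equiv.Perm.apply_pow_apply_eq {α β : Type*} {σ : Equiv.Perm α} {g : α → β}
    (hg : ∀ i, g (σ i) = g i) (k : ℕ) (i : α) : g ((σ ^ k) i) = g i := by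
  induction k generalizing i with
  | zero => rfl
  | succ k ih => rw [pow_succ, Equiv.Perm.mul_apply, ih, hg]

lemma Equiv.Perm.SameCycle.apply_eq {α β : Type*} [Finite α] {σ : Equiv.Perm α} {g : α → β}
    (hg : ∀ i, g (σ i) = g i) {i j : α} (h : σ.SameCycle i j) : g i = g j := by
  obtain ⟨k, rfl⟩ := h.exists_nat_pow_eq
  exact (σ.apply_pow_apply_eq hg k i).symm

section CycleAverage

open Finset

variable {F : Type*} [Field F] {n p : ℕ} {σ : Equiv.Perm (Fin n)}

lemma finrank_constantOnCycles_eq_card {κ : Type*} [Fintype κ] (c : Fin n → κ)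
    (hc : Function.Surjective c) (hcycle : ∀ i j, c i = c j ↔ σ.SameCycle i j) :
    finrank F (constantOnCycles (F := F) σ) = Fintype.card κ := by
  have hrange : LinearMap.range (LinearMap.funLeft F F c) = constantOnCycles σ := by
    apply le_antisymm
    · rintro _ ⟨y, rfl⟩ i
      exact congrArg y ((hcycle _ _).mpr (Equiv.Perm.sameCycle_apply_left.mpr .rfl))
    · intro x hx
      refine ⟨x ∘ Function.surjInv hc, funext fun i => ?_⟩
      exact ((hcycle _ _).mp (Function.surjInv_eq hc (c i))).apply_eq hx
  rw [← hrange, LinearMap.finrank_range_of_inj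
    (LinearMap.funLeft_injective_of_surjective _ _ c hc), finrank_fintype_fun_eq_card]

variable (p σ) in
noncomputable def cycleAverage (x : Fin n → F) : Fin n → F :=
  (p : F)⁻¹ • ∑ k ∈ range p, x ∘ ⇑(σ ^ k)

lemma cycleAverage_apply (x : Fin n → F) (i : Fin n) :
    cycleAverage p σ x i = (p : F)⁻¹ * ∑ k ∈ range p, x ((σ ^ k) i) := by
  simp [cycleAverage, Finset.sum_apply]

lemma cycleAverage_mem_constantOnCycles (hσ : σ ^ p = 1) (x : Fin n → F) :
    cycleAverage p σ x ∈ constantOnCycles σ := by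
  intro i
  simp only [cycleAverage_apply, ← Equiv.Perm.mul_apply, ← pow_succ]
  congr 1
  have h := (sum_range_succ' (fun k => x ((σ ^ k) i)) p).symm.trans
    (sum_range_succ (fun k => x ((σ ^ k) i)) p)
  rwa [hσ, pow_zero, add_left_inj] at h

lemma cycleAverage_apply_of_apply_eq_self (hpF : (p : F) ≠ 0) (x : Fin n → F) {i : Fin n}
    (hi : σ i = i) : cycleAverage p σ x i = x i := by
  simp [cycleAverage_apply, Equiv.Perm.pow_apply_eq_self_of_apply_eq_self hi, hpF]

lemma sum_range_pow_apply_of_mem_constantOnCycles {x : Fin n → F}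
    (hx : x ∈ constantOnCycles σ) (i : Fin n) :
    ∑ k ∈ range p, x ((σ ^ k) i) = p * x i := by
  simp [σ.apply_pow_apply_eq hx]

lemma sub_cycleAverage_mem_cycleSumZero (hσ : σ ^ p = 1) (hpF : (p : F) ≠ 0)
    (x : Fin n → F) : x - cycleAverage p σ x ∈ cycleSumZero σ p := by
  refine ⟨fun i hi => by simp [cycleAverage_apply_of_apply_eq_self hpF x hi], fun i => ?_⟩
  simp only [Pi.sub_apply, sum_sub_distrib]
  rw [sum_range_pow_apply_of_mem_constantOnCycles (cycleAverage_mem_constantOnCycles hσ x),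
    cycleAverage_apply, mul_inv_cancel_left₀ hpF, sub_self]

lemma constantOnCycles_le_orthogonal_cycleSumZero (hpF : (p : F) ≠ 0) :
    constantOnCycles σ ≤
      LinearMap.BilinForm.orthogonal (dotProductBilin F F) (cycleSumZero σ p) := by
  intro x hx y hy
  have key : (p : F) * (y ⬝ᵥ x) = 0 := calc
    (p : F) * (y ⬝ᵥ x) = ∑ k ∈ range p, ∑ i, y ((σ ^ k) i) * x ((σ ^ k) i) := by
      rw [sum_congr rfl fun k _ => Equiv.sum_comp (σ ^ k) fun i => y i * x i]
      simp [dotProduct]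
    _ = ∑ i, x i * ∑ k ∈ range p, y ((σ ^ k) i) := by
      rw [sum_comm]
      simp [σ.apply_pow_apply_eq hx, mul_sum, mul_comm]
    _ = 0 := by simp [hy.2]
  exact (mul_eq_zero.mp key).resolve_left hpF

lemma disjoint_constantOnCycles_cycleSumZero (hpF : (p : F) ≠ 0) :
    Disjoint (constantOnCycles (F := F) σ) (cycleSumZero σ p) := by
  refine Submodule.disjoint_def.mpr fun x hx hx' => funext fun i => ?_
  have h := hx'.2 i
  rw [sum_range_pow_apply_of_mem_constantOnCycles hx] at h
  exact (mul_eq_zero.mp h).resolve_left hpF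

lemma isCompl_constantOnCycles_cycleSumZero (hσ : σ ^ p = 1) (hpF : (p : F) ≠ 0) :
    IsCompl (constantOnCycles (F := F) σ) (cycleSumZero σ p) := by
  refine ⟨disjoint_constantOnCycles_cycleSumZero hpF, codisjoint_iff.mpr ?_⟩
  refine eq_top_iff.mpr fun x _ => ?_
  rw [← add_sub_cancel (cycleAverage p σ x) x]
  exact Submodule.add_mem_sup (cycleAverage_mem_constantOnCycles hσ x)
    (sub_cycleAverage_mem_cycleSumZero hσ hpF x)

lemma comp_pow_mem_of_map_permLinear_eq {C : Submodule F (Fin n → F)}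
    (hC : C.map (permLinear σ) = C) {x : Fin n → F} (hx : x ∈ C) (k : ℕ) :
    x ∘ ⇑(σ ^ k) ∈ C := by
  induction k with
  | zero => exact hx
  | succ k ih =>
    rw [← hC] at ih
    obtain ⟨w, hw, hxw⟩ := ih
    have hwx : x ∘ ⇑(σ ^ (k + 1)) = w := funext fun i => by
      simpa [permLinear, pow_succ] using (congrFun hxw (σ i)).symm
    exact hwx ▸ hw

lemma cycleAverage_mem {C : Submodule F (Fin n → F)} (hC : C.map (permLinear σ) = C)
    {x : Fin n → F} (hx : x ∈ C) : cycleAverage p σ x ∈ C :=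
  C.smul_mem _ (C.sum_mem fun k _ => comp_pow_mem_of_map_permLinear_eq hC hx k)

lemma inf_constantOnCycles_sup_inf_cycleSumZero (hσ : σ ^ p = 1) (hpF : (p : F) ≠ 0)
    {C : Submodule F (Fin n → F)} (hC : C.map (permLinear σ) = C) :
    C ⊓ constantOnCycles σ ⊔ C ⊓ cycleSumZero σ p = C := by
  refine le_antisymm (sup_le inf_le_left inf_le_left) fun x hx => ?_
  rw [← add_sub_cancel (cycleAverage p σ x) x]
  exact Submodule.add_mem_sup ⟨cycleAverage_mem hC hx, cycleAverage_mem_constantOnCycles hσ x⟩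
    ⟨C.sub_mem hx (cycleAverage_mem hC hx), sub_cycleAverage_mem_cycleSumZero hσ hpF x⟩

end CycleAverage

/-- `σ` rotates each of the `t` blocks `[p q, p q + p)` cyclically and fixes the last `f`
coordinates. -/
def IsBlockRotation {p t f : ℕ} (σ : Equiv.Perm (Fin (p * t + f))) : Prop :=
  ∀ i : Fin (p * t + f), (σ i : ℕ) =
    if (i : ℕ) < p * t then p * ((i : ℕ) / p) + (((i : ℕ) % p + 1) % p) else (i : ℕ)

lemma Nat.mul_div_add_lt_mul {p t i r : ℕ} (hi : i < p * t) (hr : r < p) :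
    p * (i / p) + r < p * t := by
  have := Nat.div_lt_of_lt_mul hi
  nlinarith

def blockLabel (p t f : ℕ) (i : Fin (p * t + f)) : Fin t ⊕ Fin f :=
  if h : (i : ℕ) < p * t then .inl ⟨i / p, Nat.div_lt_of_lt_mul h⟩
  else .inr ⟨i - p * t, by omega⟩

lemma blockLabel_surjective {p t f : ℕ} (hp : 0 < p) : Function.Surjective (blockLabel p t f) := by
  rintro (⟨q, hq⟩ | ⟨r, hr⟩)
  · have hpq : p * q < p * t := Nat.mul_lt_mul_of_pos_left hq hp
    refine ⟨⟨p * q, by omega⟩, ?_⟩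
    simp [blockLabel, hpq, Nat.mul_div_cancel_left q hp]
  · refine ⟨⟨p * t + r, by omega⟩, ?_⟩
    simp [blockLabel]

namespace IsBlockRotation

variable {p t f : ℕ} {σ : Equiv.Perm (Fin (p * t + f))}

lemma apply_eq_self (hσ : IsBlockRotation σ) {i : Fin (p * t + f)} (hi : ¬ (i : ℕ) < p * t) :
    σ i = i :=
  Fin.ext ((hσ i).trans (if_neg hi))

lemma pow_apply_val (hσ : IsBlockRotation σ) (hp : 0 < p) {i : Fin (p * t + f)}
    (hi : (i : ℕ) < p * t) (k : ℕ) :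
    ((σ ^ k) i : ℕ) = p * ((i : ℕ) / p) + ((i : ℕ) % p + k) % p := by
  induction k with
  | zero => simp [Nat.div_add_mod]
  | succ k ih =>
    have hr : ((i : ℕ) % p + k) % p < p := Nat.mod_lt _ hp
    rw [pow_succ', Equiv.Perm.mul_apply, hσ, ih, if_pos (Nat.mul_div_add_lt_mul hi hr),
      Nat.mul_add_div hp, Nat.div_eq_of_lt hr, add_zero, Nat.mul_add_mod, Nat.mod_eq_of_lt hr,
      Nat.mod_add_mod, add_assoc]

lemma pow_eq_one (hσ : IsBlockRotation σ) (hp : 0 < p) : σ ^ p = 1 := by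
  ext i
  by_cases hi : (i : ℕ) < p * t
  · rw [hσ.pow_apply_val hp hi, Nat.add_mod_right, Nat.mod_mod, Nat.div_add_mod]
    rfl
  · exact congrArg _ (Equiv.Perm.pow_apply_eq_self_of_apply_eq_self (hσ.apply_eq_self hi) p)

lemma blockLabel_apply (hσ : IsBlockRotation σ) (hp : 0 < p) (i : Fin (p * t + f)) :
    blockLabel p t f (σ i) = blockLabel p t f i := by
  by_cases hi : (i : ℕ) < p * t
  · have hval := hσ.pow_apply_val hp hi 1
    rw [pow_one] at hval
    have hr : ((i : ℕ) % p + 1) % p < p := Nat.mod_lt _ hp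
    have hσi : ((σ i : Fin (p * t + f)) : ℕ) < p * t := hval ▸ Nat.mul_div_add_lt_mul hi hr
    rw [blockLabel, blockLabel, dif_pos hi, dif_pos hσi]
    simp only [hval, Nat.mul_add_div hp, Nat.div_eq_of_lt hr, add_zero]
  · rw [hσ.apply_eq_self hi]

lemma blockLabel_eq_iff_sameCycle (hσ : IsBlockRotation σ) (hp : 0 < p) (i j : Fin (p * t + f)) :
    blockLabel p t f i = blockLabel p t f j ↔ σ.SameCycle i j := by
  refine ⟨fun h => ?_, Equiv.Perm.SameCycle.apply_eq (hσ.blockLabel_apply hp)⟩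
  unfold blockLabel at h
  split_ifs at h with hi hj hj
  · have hq : (i : ℕ) / p = j / p := by simpa using h
    have hij : (σ ^ ((j : ℕ) % p + p - (i : ℕ) % p)) i = j := by
      have := Nat.mod_lt (i : ℕ) hp
      ext
      rw [hσ.pow_apply_val hp hi, show (i : ℕ) % p + ((j : ℕ) % p + p - (i : ℕ) % p)
        = (j : ℕ) % p + p by omega, Nat.add_mod_right, Nat.mod_mod, hq, Nat.div_add_mod]
    exact hij ▸ Equiv.Perm.sameCycle_pow_right.mpr .rfl
  · have : (i : ℕ) = j := by simp at h; omega
    exact (Fin.ext this).sameCycle σ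

lemma finrank_constantOnCycles {F : Type*} [Field F] (hσ : IsBlockRotation σ) (hp : 0 < p) :
    Module.finrank F (constantOnCycles (F := F) σ) = t + f := by
  rw [finrank_constantOnCycles_eq_card _ (blockLabel_surjective hp)
    (hσ.blockLabel_eq_iff_sameCycle hp), Fintype.card_sum, Fintype.card_fin, Fintype.card_fin]

end IsBlockRotation

lemma natCast_ne_zero_of_prime_ne_ringChar {F : Type*} [Field F] {p : ℕ} (hp : p.Prime)
    (hchar : p ≠ ringChar F) : (p : F) ≠ 0 := fun h =>
  hchar ((hp.eq_one_or_self_of_dvd _ (ringChar.dvd h)).resolve_left (CharP.char_ne_one F _)).symm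

lemma dotProductBilin_nondegenerate {F ι : Type*} [Field F] [Fintype ι] :
    LinearMap.BilinForm.Nondegenerate (dotProductBilin F F : LinearMap.BilinForm F (ι → F)) :=
  ⟨fun x hx => dotProduct_eq_zero x hx,
    fun y hy => dotProduct_eq_zero y fun x => dotProduct_comm y x ▸ hy x⟩

lemma dotProductBilin_isRefl {F ι : Type*} [Field F] [Fintype ι] :
    LinearMap.BilinForm.IsRefl (dotProductBilin F F : LinearMap.BilinForm F (ι → F)) :=
  fun x y h => (dotProduct_comm y x).trans h

lemma IsSelfDualWith.orthogonal_eq {F : Type*} [Field F] {n : ℕ} {C : Submodule F (Fin n → F)}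
    (hC : IsSelfDualWith stdB C) : LinearMap.BilinForm.orthogonal (dotProductBilin F F) C = C := by
  ext x
  rw [LinearMap.BilinForm.mem_orthogonal_iff, hC x]
  refine forall₂_congr fun c _ => ?_
  rw [dotProductBilin_apply_apply, dotProduct_comm]
  rfl

theorem dim_fixed_code_and_complement_general
    {F : Type*} [Field F] {p t f : ℕ}
    (hp : p.Prime) (hchar : p ≠ ringChar F)
    (σ : Equiv.Perm (Fin (p * t + f)))
    (hσ : ∀ i : Fin (p * t + f), (σ i : ℕ) =
      if (i : ℕ) < p * t then p * ((i : ℕ) / p) + (((i : ℕ) % p + 1) % p)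
      else (i : ℕ))
    (C : Submodule F (Fin (p * t + f) → F))
    (hsd : IsSelfDualWith stdB C)
    (hinv : C.map (permLinear σ) = C) :
    2 * Module.finrank F (C ⊓ constantOnCycles σ : Submodule F (Fin (p * t + f) → F)) = t + f ∧
    2 * Module.finrank F (C ⊓ cycleSumZero σ p : Submodule F (Fin (p * t + f) → F)) = t * (p - 1) := by
  have hσ : IsBlockRotation σ := hσ
  have hpF := natCast_ne_zero_of_prime_ne_ringChar (F := F) hp hchar
  have hσp := hσ.pow_eq_one hp.pos
  have hcompl := isCompl_constantOnCycles_cycleSumZero (F := F) hσp hpF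
  obtain ⟨h₁, h₂⟩ := two_mul_finrank_inf_eq_of_isCompl dotProductBilin_nondegenerate
    dotProductBilin_isRefl hsd.orthogonal_eq hcompl
    (constantOnCycles_le_orthogonal_cycleSumZero hpF)
    (inf_constantOnCycles_sup_inf_cycleSumZero hσp hpF hinv)
  have hdim₁ := hσ.finrank_constantOnCycles (F := F) hp.pos
  have hdim := Submodule.finrank_add_eq_of_isCompl hcompl
  rw [Module.finrank_fin_fun, hdim₁] at hdim
  refine ⟨h₁.trans hdim₁, h₂.trans ?_⟩
  have : t * (p - 1) + t = p * t := by
    rw [Nat.mul_sub_one, Nat.sub_add_cancel (Nat.le_mul_of_pos_right t hp.pos), Nat.mul_comm]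
  omega

/-- Let `p ≠ char F` be prime and `C = C^⊥ ⊆ F^(pt+f)` a self-dual code invariant
under the coordinate permutation `σ` with `t` `p`-cycles and `f` fixed points.
Then `dim C(σ) = (t+f)/2` and `dim E = t(p-1)/2`, where `C(σ)` is the fixed code
and `E` the subcode of words vanishing at fixed points with zero cycle sums. -/
theorem dim_fixed_code_and_complement
    {F : Type*} [Field F] [Fintype F] {p t f : ℕ}
    (hp : p.Prime) (hchar : p ≠ ringChar F)
    (σ : Equiv.Perm (Fin (p * t + f)))
    (hσ : ∀ i : Fin (p * t + f), (σ i : ℕ) =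
      if (i : ℕ) < p * t then p * ((i : ℕ) / p) + (((i : ℕ) % p + 1) % p)
      else (i : ℕ))
    (C : Submodule F (Fin (p * t + f) → F))
    (hsd : IsSelfDualWith stdB C)
    (hinv : C.map (permLinear σ) = C) :
    2 * Module.finrank F (C ⊓ constantOnCycles σ : Submodule F (Fin (p * t + f) → F)) = t + f ∧
    2 * Module.finrank F (C ⊓ cycleSumZero σ p : Submodule F (Fin (p * t + f) → F)) = t * (p - 1) :=
  dim_fixed_code_and_complement_general hp hchar σ hσ C hsd hinv
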